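/- arXiv:1808.01767 — 2 statements merged into one kernel-verified Lean document; each statement's English description precedes it below -/
import Mathlib

section
/- Let (G,X,H) be a feasible configuration with |V(G)| ≥ 2, let v be a non-separating vertex of G, and x ∈ X_v. Define (G',X',H') = (G,X,H)/(v,x) by: G' = G ÷ v (shrinking at v), X'_u = X_u \ N_H(x) for u ∈ V(G'), and H' the hypergraph on ⋃_u X'_u with edges {e ∈ E(H) : |i_H(e) \ {x}| ≥ 2 and i_H(e) \ {x} ⊆ V(H')}, with incidences i_{H'}(e) = i_H(e) \ {x}. Then (G',X',H') is a feasible configuration; if (G,X,H) is degree-feasible then so is (G',X',H'); and if (G,X,H) is uncolorable then so is (G',X',H'). -/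
open Finset

noncomputable section
open scoped Classical

structure HGraph (α : Type) where
  verts : Finset α
  edges : Finset ℕ
  inc : ℕ → Finset α
  inc_sub : ∀ e ∈ edges, inc e ⊆ verts
  inc_card : ∀ e ∈ edges, 2 ≤ (inc e).card

variable {α β : Type} [DecidableEq α] [DecidableEq β]

namespace HGraph

def degree (G : HGraph α) (v : α) : ℕ :=
  (G.edges.filter (fun e => v ∈ G.inc e)).card

def maxDegree (G : HGraph α) : ℕ := G.verts.sup G.degree

def mult (G : HGraph α) (u v : α) : ℕ :=
  (G.edges.filter (fun e => G.inc e = {u, v})).card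

def Adj (G : HGraph α) (u v : α) : Prop :=
  u ≠ v ∧ ∃ e ∈ G.edges, u ∈ G.inc e ∧ v ∈ G.inc e

def Connected (G : HGraph α) : Prop :=
  ∀ u ∈ G.verts, ∀ v ∈ G.verts, Relation.ReflTransGen G.Adj u v

def IndepSet (H : HGraph β) (S : Finset β) : Prop :=
  ∀ e ∈ H.edges, ¬ H.inc e ⊆ S

def eraseEdge (H : HGraph β) (e₀ : ℕ) : HGraph β where
  verts := H.verts
  edges := H.edges.erase e₀
  inc := H.inc
  inc_sub := fun e he => H.inc_sub e (Finset.mem_of_mem_erase he)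
  inc_card := fun e he => H.inc_card e (Finset.mem_of_mem_erase he)

def induce (G : HGraph α) (S : Finset α) : HGraph α where
  verts := S
  edges := G.edges.filter (fun e => G.inc e ⊆ S)
  inc := G.inc
  inc_sub := fun e he => (Finset.mem_filter.mp he).2
  inc_card := fun e he => G.inc_card e (Finset.mem_filter.mp he).1

def IsSub (G' G : HGraph α) : Prop :=
  G'.verts ⊆ G.verts ∧ G'.edges ⊆ G.edges ∧ ∀ e ∈ G'.edges, G'.inc e = G.inc e

def shrink (G : HGraph α) (v : α) : HGraph α where
  verts := G.verts.erase v
  edges := G.edges.filter (fun e => 2 ≤ ((G.inc e).erase v).card)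
  inc := fun e => (G.inc e).erase v
  inc_sub := by
    intro e he y hy
    rw [Finset.mem_erase] at hy ⊢
    exact ⟨hy.1, G.inc_sub e (Finset.mem_filter.mp he).1 hy.2⟩
  inc_card := fun e he => (Finset.mem_filter.mp he).2

def nbhd (H : HGraph β) (x : β) : Finset β :=
  H.verts.filter (fun y => ∃ e ∈ H.edges, H.inc e = {x, y})

def numComponents (G : HGraph α) : ℕ :=
  (G.verts.image (fun v => G.verts.filter (fun u => Relation.ReflTransGen G.Adj v u))).card

def IsBridge (G : HGraph α) (e : ℕ) : Prop :=
  numComponents (G.eraseEdge e) = numComponents G + ((G.inc e).card - 1)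

def IsSepVertex (G : HGraph α) (v : α) : Prop :=
  ∃ A B : Finset α, A ∪ B = G.verts ∧ A ∩ B = {v} ∧ 2 ≤ A.card ∧ 2 ≤ B.card ∧
    ∀ e ∈ G.edges, G.inc e ⊆ A ∨ G.inc e ⊆ B

def IsBlock (G : HGraph α) (S : Finset α) : Prop :=
  S ⊆ G.verts ∧ (G.induce S).Connected ∧ (∀ v, ¬ IsSepVertex (G.induce S) v) ∧
    ∀ S' : Finset α, S ⊆ S' → S' ⊆ G.verts → (G.induce S').Connected →
      (∀ v, ¬ IsSepVertex (G.induce S') v) → S' = S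

end HGraph

open HGraph

def IsCover (G : HGraph α) (X : α → Finset β) (H : HGraph β) : Prop :=
  (∀ u ∈ G.verts, ∀ v ∈ G.verts, u ≠ v → Disjoint (X u) (X v)) ∧
  H.verts = G.verts.biUnion X ∧
  (∀ v ∈ G.verts, H.IndepSet (X v)) ∧
  ∃ M : ℕ → Finset ℕ,
    (∀ e ∈ G.edges,
      M e ⊆ H.edges ∧
      (∀ e' ∈ M e, (∀ v ∈ G.inc e, (H.inc e' ∩ X v).card = 1) ∧
        H.inc e' ⊆ (G.inc e).biUnion X) ∧
      ∀ e₁ ∈ M e, ∀ e₂ ∈ M e, e₁ ≠ e₂ → Disjoint (H.inc e₁) (H.inc e₂)) ∧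
    H.edges = G.edges.biUnion M

def HasIT (H : HGraph β) (Vs : Finset α) (X : α → Finset β) : Prop :=
  ∃ T : Finset β, H.IndepSet T ∧ ∀ v ∈ Vs, (T ∩ X v).card = 1

def MinUncol (H : HGraph β) (Vs : Finset α) (X : α → Finset β) : Prop :=
  ¬ HasIT H Vs X ∧ ∀ e ∈ H.edges, HasIT (H.eraseEdge e) Vs X

def DPColorableAt (G : HGraph α) (k : ℕ) : Prop :=
  ∀ (X : α → Finset ℕ) (H : HGraph ℕ),
    IsCover G X H → (∀ v ∈ G.verts, k ≤ (X v).card) → HasIT H G.verts X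

def chiDP (G : HGraph α) : ℕ := sInf {k | DPColorableAt G k}

def DPDegreeColorable (G : HGraph α) : Prop :=
  ∀ (X : α → Finset ℕ) (H : HGraph ℕ),
    IsCover G X H → (∀ v ∈ G.verts, G.degree v ≤ (X v).card) → HasIT H G.verts X

def colNum (G : HGraph α) : ℕ :=
  sInf {k | ∀ G' : HGraph α, G'.IsSub G → G'.verts.Nonempty →
    ∃ v ∈ G'.verts, G'.degree v ≤ k}

def ProperColoring (G : HGraph α) (φ : α → ℕ) : Prop :=
  ∀ e ∈ G.edges, ∃ u ∈ G.inc e, ∃ v ∈ G.inc e, φ u ≠ φ v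

def LColorable (G : HGraph α) (L : α → Finset ℕ) : Prop :=
  ∃ φ : α → ℕ, ProperColoring G φ ∧ ∀ v ∈ G.verts, φ v ∈ L v

def chiList (G : HGraph α) : ℕ :=
  sInf {k | ∀ L : α → Finset ℕ, (∀ v ∈ G.verts, k ≤ (L v).card) → LColorable G L}

def IsTKn (B : HGraph α) (t n : ℕ) : Prop :=
  1 ≤ n ∧ B.verts.card = n ∧ (∀ e ∈ B.edges, (B.inc e).card = 2) ∧
  ∀ u ∈ B.verts, ∀ v ∈ B.verts, u ≠ v → B.mult u v = t

def IsTCn (B : HGraph α) (t n : ℕ) : Prop :=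
  3 ≤ n ∧ B.verts.card = n ∧ (∀ e ∈ B.edges, (B.inc e).card = 2) ∧
  ∃ f : ℕ → α,
    B.verts = (Finset.range n).image f ∧
    (∀ i < n, ∀ j < n, i ≠ j → f i ≠ f j) ∧
    ∀ i < n, ∀ j < n, i ≠ j →
      B.mult (f i) (f j) = if j = (i + 1) % n ∨ i = (j + 1) % n then t else 0

def IsDPHyperbrick (B : HGraph α) : Prop :=
  (∃ t n, 1 ≤ t ∧ 1 ≤ n ∧ IsTKn B t n) ∨
  (∃ t n, 1 ≤ t ∧ 3 ≤ n ∧ IsTCn B t n) ∨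
  (∃ e ∈ B.edges, B.verts = B.inc e ∧ B.edges = {e})

def AdjPair (G : HGraph α) (u v : α) : Prop :=
  u ≠ v ∧ ∃ e ∈ G.edges, G.inc e = {u, v}

def IsKConfig (G : HGraph α) (X : α → Finset β) (H : HGraph β) (t n : ℕ) : Prop :=
  1 ≤ t ∧ 1 ≤ n ∧ IsTKn G t n ∧ IsCover G X H ∧
  ∃ P : α → ℕ → Finset β,
    (∀ v ∈ G.verts, ∀ i ∈ Finset.range (n - 1), ∀ j ∈ Finset.range (n - 1),
      i ≠ j → Disjoint (P v i) (P v j)) ∧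
    (∀ v ∈ G.verts, X v = (Finset.range (n - 1)).biUnion (P v)) ∧
    (∀ v ∈ G.verts, ∀ i ∈ Finset.range (n - 1), (P v i).card = t) ∧
    (∀ i ∈ Finset.range (n - 1), ∀ u ∈ G.verts, ∀ v ∈ G.verts, u ≠ v →
      ∀ x ∈ P u i, ∀ y ∈ P v i, ∃ e ∈ H.edges, H.inc e = {x, y}) ∧
    (∀ e ∈ H.edges, ∃ i ∈ Finset.range (n - 1), ∃ u ∈ G.verts, ∃ v ∈ G.verts,
      u ≠ v ∧ ∃ x ∈ P u i, ∃ y ∈ P v i, H.inc e = {x, y})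

def IsOddCConfig (G : HGraph α) (X : α → Finset β) (H : HGraph β) (t n : ℕ) : Prop :=
  1 ≤ t ∧ 5 ≤ n ∧ Odd n ∧ IsTCn G t n ∧ IsCover G X H ∧
  ∃ P : α → ℕ → Finset β,
    (∀ v ∈ G.verts, Disjoint (P v 0) (P v 1)) ∧
    (∀ v ∈ G.verts, X v = P v 0 ∪ P v 1) ∧
    (∀ v ∈ G.verts, (P v 0).card = t ∧ (P v 1).card = t) ∧
    (∀ i ∈ ({0, 1} : Finset ℕ), ∀ u ∈ G.verts, ∀ v ∈ G.verts, AdjPair G u v →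
      ∀ x ∈ P u i, ∀ y ∈ P v i, ∃ e ∈ H.edges, H.inc e = {x, y}) ∧
    (∀ e ∈ H.edges, ∃ i ∈ ({0, 1} : Finset ℕ), ∃ u ∈ G.verts, ∃ v ∈ G.verts,
      AdjPair G u v ∧ ∃ x ∈ P u i, ∃ y ∈ P v i, H.inc e = {x, y})

def IsEvenCConfig (G : HGraph α) (X : α → Finset β) (H : HGraph β) (t n : ℕ) : Prop :=
  1 ≤ t ∧ 4 ≤ n ∧ Even n ∧ IsTCn G t n ∧ IsCover G X H ∧
  ∃ P : α → ℕ → Finset β, ∃ w w' : α, w ∈ G.verts ∧ w' ∈ G.verts ∧ AdjPair G w w' ∧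
    (∀ v ∈ G.verts, Disjoint (P v 0) (P v 1)) ∧
    (∀ v ∈ G.verts, X v = P v 0 ∪ P v 1) ∧
    (∀ v ∈ G.verts, (P v 0).card = t ∧ (P v 1).card = t) ∧
    (∀ i ∈ ({0, 1} : Finset ℕ), ∀ u ∈ G.verts, ∀ v ∈ G.verts, AdjPair G u v →
      ({u, v} : Finset α) ≠ {w, w'} →
      ∀ x ∈ P u i, ∀ y ∈ P v i, ∃ e ∈ H.edges, H.inc e = {x, y}) ∧
    (∀ x ∈ P w 0, ∀ y ∈ P w' 1, ∃ e ∈ H.edges, H.inc e = {x, y}) ∧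
    (∀ x ∈ P w 1, ∀ y ∈ P w' 0, ∃ e ∈ H.edges, H.inc e = {x, y}) ∧
    (∀ e ∈ H.edges, ∃ x y : β, H.inc e = {x, y} ∧
      ((∃ i ∈ ({0, 1} : Finset ℕ), ∃ u ∈ G.verts, ∃ v ∈ G.verts,
        AdjPair G u v ∧ ({u, v} : Finset α) ≠ {w, w'} ∧ x ∈ P u i ∧ y ∈ P v i) ∨
       (x ∈ P w 0 ∧ y ∈ P w' 1) ∨ (x ∈ P w 1 ∧ y ∈ P w' 0)))

def IsEConfig (G : HGraph α) (X : α → Finset β) (H : HGraph β) : Prop :=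
  (∃ e₀ ∈ G.edges, G.edges = {e₀} ∧ G.verts = G.inc e₀) ∧
  IsCover G X H ∧ (∀ v ∈ G.verts, (X v).card = 1) ∧
  ∃ e₁ ∈ H.edges, H.edges = {e₁} ∧ H.inc e₁ = G.verts.biUnion X

def IsMergeOf (G : HGraph α) (X : α → Finset β) (H : HGraph β)
    (G₁ : HGraph α) (X₁ : α → Finset β) (H₁ : HGraph β)
    (G₂ : HGraph α) (X₂ : α → Finset β) (H₂ : HGraph β)
    (v₁ v₂ vs : α) : Prop :=
  Disjoint G₁.verts G₂.verts ∧ Disjoint G₁.edges G₂.edges ∧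
  Disjoint H₁.verts H₂.verts ∧ Disjoint H₁.edges H₂.edges ∧
  v₁ ∈ G₁.verts ∧ v₂ ∈ G₂.verts ∧ vs ∉ G₁.verts ∪ G₂.verts ∧
  G.verts = insert vs (((G₁.verts ∪ G₂.verts).erase v₁).erase v₂) ∧
  G.edges = G₁.edges ∪ G₂.edges ∧
  (∀ e ∈ G₁.edges, G.inc e =
    if v₁ ∈ G₁.inc e then insert vs ((G₁.inc e).erase v₁) else G₁.inc e) ∧
  (∀ e ∈ G₂.edges, G.inc e =
    if v₂ ∈ G₂.inc e then insert vs ((G₂.inc e).erase v₂) else G₂.inc e) ∧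
  H.verts = H₁.verts ∪ H₂.verts ∧ H.edges = H₁.edges ∪ H₂.edges ∧
  (∀ e ∈ H₁.edges, H.inc e = H₁.inc e) ∧ (∀ e ∈ H₂.edges, H.inc e = H₂.inc e) ∧
  X vs = X₁ v₁ ∪ X₂ v₂ ∧
  (∀ u ∈ G₁.verts.erase v₁, X u = X₁ u) ∧ (∀ u ∈ G₂.verts.erase v₂, X u = X₂ u)

inductive Constructible : HGraph α → (α → Finset β) → HGraph β → Prop where
  | K : ∀ {G : HGraph α} {X : α → Finset β} {H : HGraph β} {t n : ℕ},
      IsKConfig G X H t n → Constructible G X H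
  | Codd : ∀ {G : HGraph α} {X : α → Finset β} {H : HGraph β} {t n : ℕ},
      IsOddCConfig G X H t n → Constructible G X H
  | Ceven : ∀ {G : HGraph α} {X : α → Finset β} {H : HGraph β} {t n : ℕ},
      IsEvenCConfig G X H t n → Constructible G X H
  | E : ∀ {G : HGraph α} {X : α → Finset β} {H : HGraph β},
      IsEConfig G X H → Constructible G X H
  | merge : ∀ {G G₁ G₂ : HGraph α} {X X₁ X₂ : α → Finset β} {H H₁ H₂ : HGraph β}
      {v₁ v₂ vs : α},
      Constructible G₁ X₁ H₁ → Constructible G₂ X₂ H₂ →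
      IsMergeOf G X H G₁ X₁ H₁ G₂ X₂ H₂ v₁ v₂ vs → Constructible G X H

def reducedVerts (G : HGraph α) (X : α → Finset β) (H : HGraph β)
    (v : α) (x : β) : Finset β :=
  (G.shrink v).verts.biUnion (fun u => X u \ H.nbhd x)

def reduceH (G : HGraph α) (X : α → Finset β) (H : HGraph β)
    (v : α) (x : β) : HGraph β where
  verts := reducedVerts G X H v x
  edges := H.edges.filter (fun e =>
    2 ≤ ((H.inc e).erase x).card ∧ (H.inc e).erase x ⊆ reducedVerts G X H v x)
  inc := fun e => (H.inc e).erase x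
  inc_sub := fun e he => (Finset.mem_filter.mp he).2.2
  inc_card := fun e he => (Finset.mem_filter.mp he).2.1

/-! A disconnection of `G ÷ v` would exhibit `v` as a separating vertex of `G`, so `G ÷ v` stays
connected. An edge of `H` that survives in `H'` lies in the matching of an edge `e` of `G`, and
it meets each `X' w`, `w ∈ e ∖ v`, exactly where it met `X w`; this transfers the cover axioms to
`e ∖ v`. A neighbour of `x` in `X u` is the partner of `x` in the matching of some edge of `G`
with incidence `{u, v}`, different neighbours giving different edges since a matching uses `x`
at most once; those edges disappear in `G ÷ v`, so `|X' u| ≥ d(u) - mult(u, v) ≥ d_{G ÷ v}(u)`.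
Finally, adding `x` to an independent transversal of `H'` gives one of `H`: an edge of `H`
inside it that is not an edge of `H'` is `{x, y}` with `y` a neighbour of `x`, which was deleted. -/

namespace HGraph

variable {G : HGraph α} {v : α}

theorem shrink_adj_of_mem_inc {e : ℕ} {y z : α} (he : e ∈ G.edges)
    (hy : y ∈ (G.inc e).erase v) (hz : z ∈ (G.inc e).erase v) (hyz : y ≠ z) :
    (G.shrink v).Adj y z :=
  ⟨hyz, e, Finset.mem_filter.mpr ⟨he, Finset.one_lt_card.mpr ⟨y, hy, z, hz, hyz⟩⟩, hy, hz⟩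

theorem shrink_reachable_of_mem_inc {e : ℕ} {u y z : α} (he : e ∈ G.edges)
    (hy : y ∈ (G.inc e).erase v) (hz : z ∈ (G.inc e).erase v)
    (huy : Relation.ReflTransGen (G.shrink v).Adj u y) :
    Relation.ReflTransGen (G.shrink v).Adj u z := by
  rcases eq_or_ne y z with rfl | hyz
  · exact huy
  · exact huy.tail (shrink_adj_of_mem_inc he hy hz hyz)

theorem isSepVertex_of_split (hv : v ∈ G.verts) {C : Finset α} (hC : C ⊆ G.verts.erase v)
    {u w : α} (hu : u ∈ C) (hw : w ∈ G.verts.erase v \ C)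
    (hsplit : ∀ e ∈ G.edges, (G.inc e).erase v ⊆ C ∨ Disjoint ((G.inc e).erase v) C) :
    G.IsSepVertex v := by
  have hne : ∀ {z}, z ∈ G.verts.erase v → v ≠ z := fun hz => (Finset.ne_of_mem_erase hz).symm
  refine ⟨insert v C, insert v (G.verts.erase v \ C), ?_, ?_, ?_, ?_, ?_⟩
  · rw [← Finset.insert_union_distrib, Finset.union_sdiff_of_subset hC, Finset.insert_erase hv]
  · rw [← Finset.insert_inter_distrib, Finset.inter_sdiff_self, insert_empty_eq]
  · exact Finset.one_lt_card.mpr ⟨v, Finset.mem_insert_self _ _, u,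
      Finset.mem_insert_of_mem hu, hne (hC hu)⟩
  · exact Finset.one_lt_card.mpr ⟨v, Finset.mem_insert_self _ _, w,
      Finset.mem_insert_of_mem hw, hne (Finset.mem_sdiff.mp hw).1⟩
  · intro e he
    simp only [Finset.subset_insert_iff, Finset.subset_sdiff]
    exact (hsplit e he).imp_right fun hdisj =>
      ⟨Finset.erase_subset_erase v (G.inc_sub e he), hdisj⟩

theorem connected_shrink_of_not_isSepVertex (hv : v ∈ G.verts) (hns : ¬ G.IsSepVertex v) :
    (G.shrink v).Connected := by
  intro u hu w hw
  by_contra huw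
  let C := (G.verts.erase v).filter (Relation.ReflTransGen (G.shrink v).Adj u)
  refine hns (isSepVertex_of_split hv (C := C) (Finset.filter_subset _ _)
    (Finset.mem_filter.mpr ⟨hu, .refl⟩)
    (Finset.mem_sdiff.mpr ⟨hw, fun hwC => huw (Finset.mem_filter.mp hwC).2⟩) ?_)
  intro e he
  rw [or_iff_not_imp_right, Finset.not_disjoint_iff]
  rintro ⟨y, hy, hyC⟩ z hz
  exact Finset.mem_filter.mpr ⟨Finset.erase_subset_erase v (G.inc_sub e he) hz,
    shrink_reachable_of_mem_inc he hy hz (Finset.mem_filter.mp hyC).2⟩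

theorem degree_shrink_add_mult_le {u : α} (huv : u ≠ v) :
    (G.shrink v).degree u + G.mult u v ≤ G.degree u := by
  rw [degree, mult, ← Finset.card_union_of_disjoint]
  · apply Finset.card_le_card
    intro e
    simp only [shrink, Finset.mem_union, Finset.mem_filter, Finset.mem_erase]
    rintro (⟨⟨he, -⟩, -, hue⟩ | ⟨he, hinc⟩)
    · exact ⟨he, hue⟩
    · exact ⟨he, hinc ▸ Finset.mem_insert_self u {v}⟩
  · rw [Finset.disjoint_left]
    intro e he hmult
    have hinc := (Finset.mem_filter.mp hmult).2
    have hcard := (Finset.mem_filter.mp (Finset.mem_filter.mp he).1).2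
    rw [hinc, Finset.erase_insert_of_ne huv, Finset.erase_singleton] at hcard
    simp at hcard

end HGraph

def IsCoverMatching (G : HGraph α) (X : α → Finset β) (H : HGraph β) (M : ℕ → Finset ℕ) :
    Prop :=
  (∀ e ∈ G.edges,
    M e ⊆ H.edges ∧
    (∀ e' ∈ M e, (∀ v ∈ G.inc e, (H.inc e' ∩ X v).card = 1) ∧
      H.inc e' ⊆ (G.inc e).biUnion X) ∧
    ∀ e₁ ∈ M e, ∀ e₂ ∈ M e, e₁ ≠ e₂ → Disjoint (H.inc e₁) (H.inc e₂)) ∧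
  H.edges = G.edges.biUnion M

section Cover

variable {G : HGraph α} {X : α → Finset β} {H : HGraph β} {M : ℕ → Finset ℕ}
  {u v w : α} {x y : β} {e e' : ℕ}

section

omit [DecidableEq α]

theorem IsCover.pairwiseDisjoint (hC : IsCover G X H) : (G.verts : Set α).PairwiseDisjoint X :=
  fun u hu w hw huw => hC.1 u hu w hw huw

theorem IsCover.exists_isCoverMatching (hC : IsCover G X H) : ∃ M, IsCoverMatching G X H M :=
  hC.2.2.2

namespace IsCoverMatching

variable (hM : IsCoverMatching G X H M)
include hM

theorem exists_mem_edges (he' : e' ∈ H.edges) : ∃ e ∈ G.edges, e' ∈ M e :=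
  Finset.mem_biUnion.mp (hM.2 ▸ he')

theorem card_inter_eq_one (he : e ∈ G.edges) (he' : e' ∈ M e) (hw : w ∈ G.inc e) :
    (H.inc e' ∩ X w).card = 1 :=
  ((hM.1 e he).2.1 e' he').1 w hw

theorem mem_inc_of_mem (hX : (G.verts : Set α).PairwiseDisjoint X) (he : e ∈ G.edges)
    (he' : e' ∈ M e) (hye : y ∈ H.inc e') (hw : w ∈ G.verts) (hyw : y ∈ X w) : w ∈ G.inc e := by
  obtain ⟨w', hw', hyw'⟩ := Finset.mem_biUnion.mp (((hM.1 e he).2.1 e' he').2 hye)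
  rwa [hX.elim_finset hw (G.inc_sub e he hw') y hyw hyw']

theorem card_inter_le_one (hX : (G.verts : Set α).PairwiseDisjoint X) (he' : e' ∈ H.edges)
    (hw : w ∈ G.verts) : (H.inc e' ∩ X w).card ≤ 1 := by
  obtain ⟨e, he, he'M⟩ := hM.exists_mem_edges he'
  by_cases hwe : w ∈ G.inc e
  · exact (hM.card_inter_eq_one he he'M hwe).le
  · rw [Finset.card_le_one]
    intro y hy
    exact absurd (hM.mem_inc_of_mem hX he he'M (Finset.mem_inter.mp hy).1 hw
      (Finset.mem_inter.mp hy).2) hwe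

theorem card_partners_le_one (he : e ∈ G.edges) (hxu : x ∉ X u) :
    ((X u).filter fun y => ∃ e' ∈ M e, H.inc e' = {x, y}).card ≤ 1 := by
  rw [Finset.card_le_one]
  simp only [Finset.mem_filter]
  rintro y₁ ⟨hy₁, e₁, he₁, hinc₁⟩ y₂ ⟨-, e₂, he₂, hinc₂⟩
  by_cases he₁₂ : e₁ = e₂
  · subst he₁₂
    have hy₁' : y₁ ∈ ({x, y₂} : Finset β) := hinc₂ ▸ hinc₁ ▸ by simp
    rw [Finset.mem_insert, Finset.mem_singleton] at hy₁'
    exact hy₁'.resolve_left fun h => hxu (h ▸ hy₁)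
  · exact absurd ((hM.1 e he).2.2 e₁ he₁ e₂ he₂ he₁₂) <|
      Finset.not_disjoint_iff.mpr ⟨x, by simp [hinc₁], by simp [hinc₂]⟩

end IsCoverMatching

end

theorem IsCoverMatching.inc_eq_pair (hM : IsCoverMatching G X H M)
    (hX : (G.verts : Set α).PairwiseDisjoint X) (he : e ∈ G.edges) (he' : e' ∈ M e)
    (hinc : H.inc e' = {x, y}) (hu : u ∈ G.verts) (hv : v ∈ G.verts) (hx : x ∈ X v) (hy : y ∈ X u) :
    G.inc e = {u, v} := by
  ext w
  constructor
  · intro hw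
    obtain ⟨z, hz⟩ := Finset.card_pos.mp (hM.card_inter_eq_one he he' hw ▸ one_pos)
    have hwG := G.inc_sub e he hw
    rw [Finset.mem_inter, hinc, Finset.mem_insert, Finset.mem_singleton] at hz
    rcases hz with ⟨rfl | rfl, hzw⟩
    · simp [hX.elim_finset hwG hv z hzw hx]
    · simp [hX.elim_finset hwG hu z hzw hy]
  · have hxe : x ∈ H.inc e' := by simp [hinc]
    have hye : y ∈ H.inc e' := by simp [hinc]
    rw [Finset.mem_insert, Finset.mem_singleton]
    rintro (rfl | rfl)
    · exact hM.mem_inc_of_mem hX he he' hye hu hy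
    · exact hM.mem_inc_of_mem hX he he' hxe hv hx

theorem IsCover.card_inter_nbhd_le_mult (hC : IsCover G X H) (hu : u ∈ G.verts)
    (hv : v ∈ G.verts) (huv : u ≠ v) (hx : x ∈ X v) :
    (X u ∩ H.nbhd x).card ≤ G.mult u v := by
  have hX := hC.pairwiseDisjoint
  obtain ⟨M, hM⟩ := hC.exists_isCoverMatching
  have hxu : x ∉ X u := fun h => huv (hX.elim_finset hu hv x h hx)
  let B := G.edges.filter fun e => G.inc e = {u, v}
  have hcover : X u ∩ H.nbhd x ⊆
      B.biUnion fun e => (X u).filter fun y => ∃ e' ∈ M e, H.inc e' = {x, y} := by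
    intro y hy
    obtain ⟨hyu, hyN⟩ := Finset.mem_inter.mp hy
    obtain ⟨-, e', he', hinc⟩ := Finset.mem_filter.mp hyN
    obtain ⟨e, he, he'M⟩ := hM.exists_mem_edges he'
    exact Finset.mem_biUnion.mpr ⟨e,
      Finset.mem_filter.mpr ⟨he, hM.inc_eq_pair hX he he'M hinc hu hv hx hyu⟩,
      Finset.mem_filter.mpr ⟨hyu, e', he'M, hinc⟩⟩
  calc (X u ∩ H.nbhd x).card
      ≤ B.card * 1 := (Finset.card_le_card hcover).trans <|
        Finset.card_biUnion_le_card_mul _ _ _ fun e he =>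
          hM.card_partners_le_one (Finset.mem_filter.mp he).1 hxu
    _ = G.mult u v := mul_one _

end Cover

section Reduction

variable {G : HGraph α} {X : α → Finset β} {H : HGraph β} {M : ℕ → Finset ℕ}
  {v w : α} {x z : β} {e e' : ℕ}

theorem mem_reducedVerts :
    z ∈ reducedVerts G X H v x ↔ ∃ w, w ≠ v ∧ w ∈ G.verts ∧ z ∈ X w ∧ z ∉ H.nbhd x := by
  simp [reducedVerts, shrink, and_assoc]

theorem notMem_nbhd_of_mem_reducedVerts (hz : z ∈ reducedVerts G X H v x) : z ∉ H.nbhd x := by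
  obtain ⟨-, -, -, -, h⟩ := mem_reducedVerts.mp hz
  exact h

theorem notMem_of_mem_reducedVerts (hX : (G.verts : Set α).PairwiseDisjoint X)
    (hv : v ∈ G.verts) (hz : z ∈ reducedVerts G X H v x) : z ∉ X v := by
  obtain ⟨w, hwv, hw, hzw, -⟩ := mem_reducedVerts.mp hz
  exact fun hzv => hwv (hX.elim_finset hw hv z hzw hzv)

theorem hasIT_of_hasIT_reduceH (hX : (G.verts : Set α).PairwiseDisjoint X) (hv : v ∈ G.verts)
    (hx : x ∈ X v)
    (hIT : HasIT (reduceH G X H v x) (G.shrink v).verts fun u => X u \ H.nbhd x) :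
    HasIT H G.verts X := by
  obtain ⟨T, hTind, hT⟩ := hIT
  let S := T ∩ reducedVerts G X H v x
  refine ⟨insert x S, ?_, ?_⟩
  · intro e he hsub
    have hers : (H.inc e).erase x ⊆ S := Finset.subset_insert_iff.mp hsub
    by_cases hc : 2 ≤ ((H.inc e).erase x).card
    · exact hTind e (Finset.mem_filter.mpr ⟨he, hc, hers.trans Finset.inter_subset_right⟩)
        (hers.trans Finset.inter_subset_left)
    have hxe : x ∈ H.inc e := by
      by_contra hxe
      rw [Finset.erase_eq_of_notMem hxe] at hc
      exact hc (H.inc_card e he)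
    obtain ⟨y, hy⟩ : ∃ y, (H.inc e).erase x = {y} := Finset.card_eq_one.mp <| by
      have := H.inc_card e he
      have := Finset.pred_card_le_card_erase (s := H.inc e) (a := x)
      omega
    have hyS : y ∈ S := hers (hy ▸ Finset.mem_singleton_self y)
    refine notMem_nbhd_of_mem_reducedVerts (Finset.mem_inter.mp hyS).2 ?_
    refine Finset.mem_filter.mpr ⟨H.inc_sub e he ?_, e, he, ?_⟩
    · exact Finset.mem_of_mem_erase (hy ▸ Finset.mem_singleton_self y)
    · rw [← hy, Finset.insert_erase hxe]
  · intro u hu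
    rcases eq_or_ne u v with rfl | huv
    · rw [Finset.insert_inter_of_mem hx, Finset.card_eq_one]
      refine ⟨x, ?_⟩
      rw [Finset.inter_assoc, Finset.eq_empty_of_forall_notMem fun z hz =>
        notMem_of_mem_reducedVerts hX hu (Finset.mem_inter.mp hz).1 (Finset.mem_inter.mp hz).2,
        Finset.inter_empty, insert_empty_eq]
    · have hxu : x ∉ X u := fun h => huv (hX.elim_finset hu hv x h hx)
      convert hT u (Finset.mem_erase.mpr ⟨huv, hu⟩) using 2
      rw [Finset.insert_inter_of_notMem hxu]
      ext z
      simp only [S, Finset.mem_inter, Finset.mem_sdiff, mem_reducedVerts]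
      constructor
      · rintro ⟨⟨hzT, -, -, -, -, hzN⟩, hzu⟩
        exact ⟨hzT, hzu, hzN⟩
      · rintro ⟨hzT, hzu, hzN⟩
        exact ⟨⟨hzT, u, huv, hu, hzu, hzN⟩, hzu⟩

theorem reduceH_inc_inter (hX : (G.verts : Set α).PairwiseDisjoint X) (hv : v ∈ G.verts)
    (hx : x ∈ X v) (he' : e' ∈ (reduceH G X H v x).edges) (hw : w ∈ G.verts) (hwv : w ≠ v) :
    (reduceH G X H v x).inc e' ∩ (X w \ H.nbhd x) = H.inc e' ∩ X w := by
  ext z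
  simp only [reduceH, Finset.mem_inter, Finset.mem_erase, Finset.mem_sdiff]
  constructor
  · rintro ⟨⟨-, hz⟩, hzw, -⟩
    exact ⟨hz, hzw⟩
  · rintro ⟨hz, hzw⟩
    have hzx : z ≠ x := by
      rintro rfl
      exact hwv (hX.elim_finset hw hv z hzw hx)
    exact ⟨⟨hzx, hz⟩, hzw, notMem_nbhd_of_mem_reducedVerts
      ((Finset.mem_filter.mp he').2.2 (Finset.mem_erase.mpr ⟨hzx, hz⟩))⟩

namespace IsCoverMatching

variable (hM : IsCoverMatching G X H M) (hX : (G.verts : Set α).PairwiseDisjoint X)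
  (hv : v ∈ G.verts) (hx : x ∈ X v)
include hM hX

theorem reduceH_inc_subset (he : e ∈ G.edges) (he' : e' ∈ M e)
    (he'R : e' ∈ (reduceH G X H v x).edges) :
    (reduceH G X H v x).inc e' ⊆ ((G.inc e).erase v).biUnion fun u => X u \ H.nbhd x := by
  intro z hz
  obtain ⟨w, hwv, hw, hzw, hzN⟩ := mem_reducedVerts.mp ((Finset.mem_filter.mp he'R).2.2 hz)
  exact Finset.mem_biUnion.mpr ⟨w, Finset.mem_erase.mpr
    ⟨hwv, hM.mem_inc_of_mem hX he he' (Finset.mem_of_mem_erase hz) hw hzw⟩,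
    Finset.mem_sdiff.mpr ⟨hzw, hzN⟩⟩

include hv hx

theorem mem_shrink_edges (he : e ∈ G.edges) (he' : e' ∈ M e)
    (he'R : e' ∈ (reduceH G X H v x).edges) : e ∈ (G.shrink v).edges := by
  obtain ⟨y, hy, z, hz, hyz⟩ := Finset.one_lt_card.mp (Finset.mem_filter.mp he'R).2.1
  have hsub := hM.reduceH_inc_subset hX he he' he'R
  obtain ⟨wy, hwy, hyw⟩ := Finset.mem_biUnion.mp (hsub hy)
  obtain ⟨wz, hwz, hzw⟩ := Finset.mem_biUnion.mp (hsub hz)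
  refine Finset.mem_filter.mpr ⟨he, Finset.one_lt_card.mpr ⟨wy, hwy, wz, hwz, ?_⟩⟩
  rintro rfl
  have hwG := G.inc_sub e he (Finset.mem_of_mem_erase hwy)
  have hle := hM.card_inter_le_one hX (Finset.mem_filter.mp he'R).1 hwG
  rw [← reduceH_inc_inter hX hv hx he'R hwG (Finset.ne_of_mem_erase hwy)] at hle
  exact hyz (Finset.card_le_one.mp hle y (Finset.mem_inter.mpr ⟨hy, hyw⟩) z
    (Finset.mem_inter.mpr ⟨hz, hzw⟩))

theorem isCover_reduceH :
    IsCover (G.shrink v) (fun u => X u \ H.nbhd x) (reduceH G X H v x) := by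
  set H' := reduceH G X H v x
  refine ⟨fun u hu w hw huw => ?_, rfl, ?_, fun e => (M e).filter (· ∈ H'.edges),
    fun e he => ⟨fun e' he' => (Finset.mem_filter.mp he').2, fun e' he' => ⟨?_, ?_⟩, ?_⟩, ?_⟩
  · exact (hX (Finset.mem_of_mem_erase hu) (Finset.mem_of_mem_erase hw) huw).mono
      Finset.sdiff_subset Finset.sdiff_subset
  · intro u hu e he hsub
    have hle := hM.card_inter_le_one hX (Finset.mem_filter.mp he).1 (Finset.mem_of_mem_erase hu)
    rw [← reduceH_inc_inter hX hv hx he (Finset.mem_of_mem_erase hu) (Finset.ne_of_mem_erase hu),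
      Finset.inter_eq_left.mpr hsub] at hle
    have := H'.inc_card e he
    omega
  · intro w hw
    have hwG := G.inc_sub e (Finset.mem_filter.mp he).1 (Finset.mem_of_mem_erase hw)
    rw [reduceH_inc_inter hX hv hx (Finset.mem_filter.mp he').2 hwG (Finset.ne_of_mem_erase hw)]
    exact hM.card_inter_eq_one (Finset.mem_filter.mp he).1 (Finset.mem_filter.mp he').1
      (Finset.mem_of_mem_erase hw)
  · exact hM.reduceH_inc_subset hX (Finset.mem_filter.mp he).1 (Finset.mem_filter.mp he').1
      (Finset.mem_filter.mp he').2
  · intro e₁ he₁ e₂ he₂ hne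
    exact ((hM.1 e (Finset.mem_filter.mp he).1).2.2 e₁ (Finset.mem_filter.mp he₁).1 e₂
      (Finset.mem_filter.mp he₂).1 hne).mono (Finset.erase_subset _ _) (Finset.erase_subset _ _)
  · ext e'
    rw [Finset.mem_biUnion]
    constructor
    · intro he'R
      obtain ⟨e, he, he'⟩ := hM.exists_mem_edges (Finset.mem_filter.mp he'R).1
      exact ⟨e, hM.mem_shrink_edges hX hv hx he he' he'R, Finset.mem_filter.mpr ⟨he', he'R⟩⟩
    · rintro ⟨e, -, he'⟩
      exact (Finset.mem_filter.mp he').2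

end IsCoverMatching

end Reduction

theorem reduction_feasible_general (G : HGraph α) (X : α → Finset β) (H : HGraph β)
    (hC : IsCover G X H)
    (v : α) (hv : v ∈ G.verts) (hns : ¬ IsSepVertex G v) (x : β) (hx : x ∈ X v) :
    (G.shrink v).Connected ∧
    IsCover (G.shrink v) (fun u => X u \ H.nbhd x) (reduceH G X H v x) ∧
    ((∀ u ∈ G.verts, G.degree u ≤ (X u).card) →
      ∀ u ∈ (G.shrink v).verts, (G.shrink v).degree u ≤ (X u \ H.nbhd x).card) ∧
    (¬ HasIT H G.verts X →
      ¬ HasIT (reduceH G X H v x) (G.shrink v).verts (fun u => X u \ H.nbhd x)) := by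
  have hX := hC.pairwiseDisjoint
  obtain ⟨M, hM⟩ := hC.exists_isCoverMatching
  refine ⟨connected_shrink_of_not_isSepVertex hv hns, hM.isCover_reduceH hX hv hx,
    fun hdeg u hu => ?_, fun hH hH' => hH (hasIT_of_hasIT_reduceH hX hv hx hH')⟩
  obtain ⟨huv, huG⟩ := Finset.mem_erase.mp hu
  have hshrink := degree_shrink_add_mult_le (G := G) huv
  have hnbhd := hC.card_inter_nbhd_le_mult huG hv huv hx
  have hsplit := Finset.card_sdiff_add_card_inter (X u) (H.nbhd x)
  have := hdeg u huG
  omega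

/-- the reduction (G,X,H)/(v,x) at a non-separating vertex v yields a
feasible configuration, preserves degree-feasibility and uncolorability. -/
theorem reduction_feasible (G : HGraph α) (X : α → Finset β) (H : HGraph β)
    (hG : G.Connected) (hC : IsCover G X H) (h2 : 2 ≤ G.verts.card)
    (v : α) (hv : v ∈ G.verts) (hns : ¬ IsSepVertex G v) (x : β) (hx : x ∈ X v) :
    (G.shrink v).Connected ∧
    IsCover (G.shrink v) (fun u => X u \ H.nbhd x) (reduceH G X H v x) ∧
    ((∀ u ∈ G.verts, G.degree u ≤ (X u).card) →
      ∀ u ∈ (G.shrink v).verts, (G.shrink v).degree u ≤ (X u \ H.nbhd x).card) ∧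
    (¬ HasIT H G.verts X →
      ¬ HasIT (reduceH G X H v x) (G.shrink v).verts (fun u => X u \ H.nbhd x)) :=
  reduction_feasible_general G X H hC v hv hns x hx
end
end

section
/- Let (G,X,H) be an uncolorable degree-feasible configuration. Then |X_v| = d_G(v) for every vertex v of G. -/
open Finset

noncomputable section
open scoped Classical

variable {α β : Type} [DecidableEq α] [DecidableEq β]

open HGraph

/-! Suppose `|X_{v₀}| > d_G(v₀)` for some vertex `v₀`. Colour the vertices greedily in order of
decreasing distance from `v₀`, so that `v₀` comes last. When a vertex `u ≠ v₀` is coloured, a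
neighbour on a shortest path to `v₀` is still uncoloured, so at most `d_G(u) - 1` edges of `G`
have all their other vertices coloured; since the cover of each edge is a matching, each such
edge forbids at most one colour of `X_u`. At `v₀` at most `d_G(v₀) < |X_{v₀}|` colours are
forbidden. Hence the greedy colouring never gets stuck and `H` has an independent transversal. -/

theorem SimpleGraph.Reachable.exists_adj_dist_lt {V : Type*} {G : SimpleGraph V} {u v : V}
    (h : G.Reachable u v) (hne : u ≠ v) : ∃ w, G.Adj u w ∧ G.dist w v < G.dist u v := by
  obtain ⟨p, hp⟩ := h.exists_walk_length_eq_dist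
  cases p with
  | nil => exact absurd rfl hne
  | cons hadj q =>
    refine ⟨_, hadj, ?_⟩
    have := SimpleGraph.dist_le q
    rw [SimpleGraph.Walk.length_cons] at hp
    omega

variable {ι : Type}

namespace HGraph

def adjGraph (G : HGraph ι) : SimpleGraph ι where
  Adj := G.Adj
  symm := ⟨fun _ _ ⟨hne, e, he, hu, hv⟩ => ⟨hne.symm, e, he, hv, hu⟩⟩
  loopless := ⟨fun _ h => h.1 rfl⟩

theorem Connected.reachable {G : HGraph ι} (hG : G.Connected) {u v : ι} (hu : u ∈ G.verts)
    (hv : v ∈ G.verts) : G.adjGraph.Reachable u v :=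
  (SimpleGraph.reachable_iff_reflTransGen u v).2 (hG u hu v hv)

theorem card_filter_subset_insert_le_degree [DecidableEq ι] (G : HGraph ι) (S : Finset ι) (u : ι) :
    #{e ∈ G.edges | u ∈ G.inc e ∧ G.inc e ⊆ insert u S} ≤ G.degree u := by
  rw [degree, ← filter_filter]
  exact card_filter_le _ _

theorem card_filter_subset_insert_lt_degree [DecidableEq ι] {G : HGraph ι} {S : Finset ι} {u : ι}
    {e : ℕ} (he : e ∈ G.edges) (hue : u ∈ G.inc e) (hS : ¬ G.inc e ⊆ insert u S) :
    #{e ∈ G.edges | u ∈ G.inc e ∧ G.inc e ⊆ insert u S} < G.degree u := by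
  rw [degree, ← filter_filter]
  exact card_lt_card (filter_ssubset.2 ⟨e, mem_filter.2 ⟨he, hue⟩, hS⟩)

end HGraph

namespace Set.PairwiseDisjoint

variable {V S I : Finset ι} {X : ι → Finset β} {T A : Finset β} {u w : ι} {x : β}

theorem mem_of_mem_biUnion (hX : (V : Set ι).PairwiseDisjoint X) (hS : S ⊆ V) (hw : w ∈ V)
    {y : β} (hy : y ∈ S.biUnion X) (hyw : y ∈ X w) : w ∈ S := by
  obtain ⟨v, hv, hyv⟩ := Finset.mem_biUnion.1 hy
  rwa [hX.elim_finset hw (hS hv) y hyw hyv]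

theorem inter_subset_of_subset_insert (hX : (V : Set ι).PairwiseDisjoint X) (hu : u ∈ V)
    (hw : w ∈ V) (hwu : w ≠ u) (hx : x ∈ X u) (hA : A ⊆ insert x T) : A ∩ X w ⊆ T ∩ X w := by
  intro y hy
  obtain ⟨hyA, hyw⟩ := Finset.mem_inter.1 hy
  refine Finset.mem_inter.2 ⟨(Finset.mem_insert.1 (hA hyA)).resolve_left ?_, hyw⟩
  rintro rfl
  exact hwu (hX.elim_finset hw hu y hyw hx)

theorem subset_insert_of_subset_insert [DecidableEq ι] (hX : (V : Set ι).PairwiseDisjoint X)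
    (hI : I ⊆ V) (hS : S ⊆ V) (hT : T ⊆ S.biUnion X) (hu : u ∈ V) (hx : x ∈ X u)
    (hmeet : ∀ v ∈ I, (A ∩ X v).Nonempty) (hA : A ⊆ insert x T) : I ⊆ insert u S := by
  intro v hv
  by_cases hvu : v = u
  · exact hvu ▸ Finset.mem_insert_self u S
  obtain ⟨y, hy⟩ := hmeet v hv
  obtain ⟨hyT, hyv⟩ := Finset.mem_inter.1 (hX.inter_subset_of_subset_insert hu (hI hv) hvu hx hA hy)
  exact Finset.mem_insert_of_mem (hX.mem_of_mem_biUnion hS (hI hv) (hT hyT) hyv)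

/-- The colour `x` is pinned down by the edge of the matching `F` through the point of `T` in
`X w`. -/
theorem card_filter_exists_subset_insert_le_one (hX : (V : Set ι).PairwiseDisjoint X)
    {B : ℕ → Finset β} {F : Finset ℕ} (hF : (F : Set ℕ).PairwiseDisjoint B)
    (hFw : ∀ e ∈ F, (B e ∩ X w).Nonempty) (hFu : ∀ e ∈ F, #(B e ∩ X u) ≤ 1)
    (hu : u ∈ V) (hw : w ∈ V) (hwu : w ≠ u) (hTw : #(T ∩ X w) ≤ 1) :
    #{x ∈ X u | ∃ e ∈ F, x ∈ B e ∧ B e ⊆ insert x T} ≤ 1 := by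
  have hpoint : ∀ e ∈ F, ∀ x ∈ X u, B e ⊆ insert x T → ∃ y ∈ T ∩ X w, y ∈ B e := by
    intro e he x hx hBT
    obtain ⟨y, hy⟩ := hFw e he
    exact ⟨y, hX.inter_subset_of_subset_insert hu hw hwu hx hBT hy, (Finset.mem_inter.1 hy).1⟩
  refine Finset.card_le_one.2 fun x₁ hx₁ x₂ hx₂ => ?_
  obtain ⟨hx₁u, e₁, he₁, hx₁e, hB₁⟩ := Finset.mem_filter.1 hx₁
  obtain ⟨hx₂u, e₂, he₂, hx₂e, hB₂⟩ := Finset.mem_filter.1 hx₂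
  obtain ⟨y₁, hy₁T, hy₁⟩ := hpoint e₁ he₁ x₁ hx₁u hB₁
  obtain ⟨y₂, hy₂T, hy₂⟩ := hpoint e₂ he₂ x₂ hx₂u hB₂
  obtain rfl := Finset.card_le_one.1 hTw y₁ hy₁T y₂ hy₂T
  obtain rfl := hF.elim_finset he₁ he₂ y₁ hy₁ hy₂
  exact Finset.card_le_one.1 (hFu e₁ he₁) x₁ (Finset.mem_inter.2 ⟨hx₁e, hx₁u⟩) x₂
    (Finset.mem_inter.2 ⟨hx₂e, hx₂u⟩)

end Set.PairwiseDisjoint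

def IsPartialIT (H : HGraph β) (S : Finset ι) (X : ι → Finset β) (T : Finset β) : Prop :=
  H.IndepSet T ∧ T ⊆ S.biUnion X ∧ ∀ v ∈ S, #(T ∩ X v) = 1

namespace IsPartialIT

variable {G : HGraph ι} {X : ι → Finset β} {H : HGraph β} {S : Finset ι} {T : Finset β}
  {u : ι} {x : β}

theorem empty (H : HGraph β) (X : ι → Finset β) : IsPartialIT H ∅ X ∅ := by
  refine ⟨fun e he hsub => ?_, empty_subset _, by simp⟩
  have := H.inc_card e he
  rw [subset_empty.1 hsub] at this
  simp at this

theorem hasIT (hT : IsPartialIT H S X T) : HasIT H S X := ⟨T, hT.1, hT.2.2⟩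

theorem insert_of_indepSet_insert [DecidableEq ι] (hX : (G.verts : Set ι).PairwiseDisjoint X)
    (hS : S ⊆ G.verts) (hu : u ∈ G.verts) (huS : u ∉ S) (hT : IsPartialIT H S X T) (hx : x ∈ X u)
    (hind : H.IndepSet (insert x T)) : IsPartialIT H (insert u S) X (insert x T) := by
  refine ⟨hind, ?_, fun v hv => ?_⟩
  · rw [biUnion_insert]
    exact insert_subset (mem_union_left _ hx) (hT.2.1.trans subset_union_right)
  obtain rfl | hvS := mem_insert.1 hv
  · have hTu : T ∩ X v = ∅ := eq_empty_of_forall_notMem fun y hy =>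
      huS (hX.mem_of_mem_biUnion hS hu (hT.2.1 (mem_inter.1 hy).1) (mem_inter.1 hy).2)
    rw [insert_inter_of_mem hx, hTu, insert_empty, card_singleton]
  · have hxv : x ∉ X v := fun hxv =>
      huS (hX.elim_finset hu (hS hvS) x hx hxv ▸ hvS)
    rw [insert_inter_of_notMem hxv, hT.2.2 v hvS]

/-- Each edge at `u` whose other vertices are all coloured forbids at most one colour of `X u`,
and no other edge forbids any. -/
theorem exists_insert [DecidableEq ι] (hC : IsCover G X H) (hS : S ⊆ G.verts) (hu : u ∈ G.verts)
    (huS : u ∉ S) (hT : IsPartialIT H S X T)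
    (hlt : #{e ∈ G.edges | u ∈ G.inc e ∧ G.inc e ⊆ insert u S} < #(X u)) :
    ∃ T', IsPartialIT H (insert u S) X T' := by
  obtain ⟨hdisj, -, -, M, hM, hHM⟩ := hC
  have hX : (G.verts : Set ι).PairwiseDisjoint X := fun a ha b hb hab => hdisj a ha b hb hab
  suffices ∃ x ∈ X u, H.IndepSet (insert x T) by
    obtain ⟨x, hx, hind⟩ := this
    exact ⟨_, hT.insert_of_indepSet_insert hX hS hu huS hx hind⟩
  by_contra! hkill
  set B := {e ∈ G.edges | u ∈ G.inc e ∧ G.inc e ⊆ insert u S}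
  let killed (e : ℕ) := {x ∈ X u | ∃ e' ∈ M e, x ∈ H.inc e' ∧ H.inc e' ⊆ insert x T}
  have hcover : X u ⊆ B.biUnion killed := by
    intro x hx
    obtain ⟨e', he'H, he'T⟩ : ∃ e' ∈ H.edges, H.inc e' ⊆ insert x T := by
      simpa [IndepSet] using hkill x hx
    obtain ⟨e, he, he'⟩ := mem_biUnion.1 (hHM ▸ he'H)
    have hxe' : x ∈ H.inc e' := by
      by_contra hxe'
      refine hT.1 e' he'H fun y hy => (mem_insert.1 (he'T hy)).resolve_left ?_
      rintro rfl
      exact hxe' hy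
    obtain ⟨hmeet, hcov⟩ := (hM e he).2.1 e' he'
    have hIV := G.inc_sub e he
    refine mem_biUnion.2 ⟨e, mem_filter.2 ⟨he, ?_, ?_⟩, mem_filter.2 ⟨hx, e', he', hxe', he'T⟩⟩
    · exact hX.mem_of_mem_biUnion hIV hu (hcov hxe') hx
    · exact hX.subset_insert_of_subset_insert hIV hS hT.2.1 hu hx
        (fun v hv => card_pos.1 (by rw [hmeet v hv]; exact one_pos)) he'T
  have hkilled : ∀ e ∈ B, #(killed e) ≤ 1 := by
    intro e heB
    obtain ⟨he, hue, heS⟩ := mem_filter.1 heB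
    obtain ⟨w, hw, hwu⟩ := exists_mem_ne (G.inc_card e he) u
    obtain ⟨-, hmeet, hF⟩ := hM e he
    exact hX.card_filter_exists_subset_insert_le_one hF
      (fun e' he' => card_pos.1 (by rw [(hmeet e' he').1 w hw]; exact one_pos))
      (fun e' he' => ((hmeet e' he').1 u hue).le) hu (G.inc_sub e he hw) hwu
      (hT.2.2 w ((mem_insert.1 (heS hw)).resolve_left hwu)).le
  have := (card_le_card hcover).trans (card_biUnion_le_card_mul B killed 1 hkilled)
  omega

end IsPartialIT

/-- `U` is the set of uncoloured vertices. They are coloured by decreasing `f`, `v₀` last; the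
neighbour of smaller `f` of the vertex being coloured is still uncoloured, which leaves a spare
colour. -/
theorem hasIT_of_isPartialIT_sdiff [DecidableEq ι] {G : HGraph ι} {X : ι → Finset β}
    {H : HGraph β} (hC : IsCover G X H) (hdf : ∀ v ∈ G.verts, G.degree v ≤ #(X v)) {v₀ : ι}
    (hslack : G.degree v₀ < #(X v₀)) (f : ι → ℕ)
    (hf : ∀ u ∈ G.verts, u ≠ v₀ → ∃ w, G.Adj u w ∧ f w < f u) {U : Finset ι}
    (hU : U ⊆ G.verts) (hv₀ : v₀ ∈ U) (hdown : ∀ u ∈ U, u ≠ v₀ → ∀ w ∈ G.verts, f w < f u → w ∈ U)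
    {T : Finset β} (hT : IsPartialIT H (G.verts \ U) X T) : HasIT H G.verts X := by
  induction U using Finset.strongInduction generalizing T with
  | H U ih =>
    have hnotin : ∀ {u}, u ∈ U → u ∉ G.verts \ U := fun hu h => (mem_sdiff.1 h).2 hu
    by_cases hU₀ : U.erase v₀ = ∅
    · have hlt : #{e ∈ G.edges | v₀ ∈ G.inc e ∧ G.inc e ⊆ insert v₀ (G.verts \ U)} < #(X v₀) :=
        (card_filter_subset_insert_le_degree G _ v₀).trans_lt hslack
      obtain ⟨T', hT'⟩ := hT.exists_insert hC sdiff_subset (hU hv₀) (hnotin hv₀) hlt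
      rw [← sdiff_erase (hU hv₀), hU₀, sdiff_empty] at hT'
      exact hT'.hasIT
    obtain ⟨u, hu, hmax⟩ := exists_max_image (U.erase v₀) f (nonempty_iff_ne_empty.2 hU₀)
    obtain ⟨huv₀, huU⟩ := mem_erase.1 hu
    obtain ⟨w, ⟨hwu, e, he, hue, hwe⟩, hfw⟩ := hf u (hU huU) huv₀
    have hwU : w ∈ U := hdown u huU huv₀ w (G.inc_sub e he hwe) hfw
    have hlt : #{e ∈ G.edges | u ∈ G.inc e ∧ G.inc e ⊆ insert u (G.verts \ U)} < #(X u) := by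
      refine (card_filter_subset_insert_lt_degree he hue fun h => ?_).trans_le (hdf u (hU huU))
      rcases mem_insert.1 (h hwe) with rfl | hw
      · exact hwu rfl
      · exact hnotin hwU hw
    obtain ⟨T', hT'⟩ := hT.exists_insert hC sdiff_subset (hU huU) (hnotin huU) hlt
    rw [← sdiff_erase (hU huU)] at hT'
    refine ih (U.erase u) (erase_ssubset huU) (erase_subset u U |>.trans hU)
      (mem_erase.2 ⟨Ne.symm huv₀, hv₀⟩) (fun u' hu' hu'v₀ w' hw' hfw' => ?_) hT'
    obtain ⟨-, hu'U⟩ := mem_erase.1 hu'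
    refine mem_erase.2 ⟨?_, hdown u' hu'U hu'v₀ w' hw' hfw'⟩
    rintro rfl
    exact (hfw'.trans_le (hmax u' (mem_erase.2 ⟨hu'v₀, hu'U⟩))).false

theorem hasIT_of_degree_lt_card [DecidableEq ι] {G : HGraph ι} {X : ι → Finset β} {H : HGraph β}
    (hG : G.Connected) (hC : IsCover G X H) (hdf : ∀ v ∈ G.verts, G.degree v ≤ #(X v))
    {v₀ : ι} (hv₀ : v₀ ∈ G.verts) (hslack : G.degree v₀ < #(X v₀)) : HasIT H G.verts X := by
  refine hasIT_of_isPartialIT_sdiff (T := ∅) hC hdf hslack (G.adjGraph.dist · v₀)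
    (fun u hu hne => (hG.reachable hu hv₀).exists_adj_dist_lt hne) subset_rfl hv₀
    (fun _ _ _ w hw _ => hw) ?_
  rw [sdiff_self]
  exact IsPartialIT.empty H X

/-- in an uncolorable degree-feasible configuration, |X_v| = d_G(v). -/
theorem uncolorable_card_eq_degree (G : HGraph α) (X : α → Finset β) (H : HGraph β)
    (hG : G.Connected) (hC : IsCover G X H)
    (hdf : ∀ v ∈ G.verts, G.degree v ≤ (X v).card)
    (hunc : ¬ HasIT H G.verts X) :
    ∀ v ∈ G.verts, (X v).card = G.degree v := by
  intro v hv
  by_contra hne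
  exact hunc (hasIT_of_degree_lt_card hG hC hdf hv ((hdf v hv).lt_of_ne (Ne.symm hne)))
end
end
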